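/- arXiv:0904.4064 — 3 statements merged into one kernel-verified Lean document; each statement's English description precedes it below -/
import Mathlib

section
/- With the setup of the combinatorial determinantal condition (P_k(m), Q_p, q, N(m) as defined from data l, d, s and m ∈ ℤ^r): if N(m) ⊆ {0,1} and N(m) contains two consecutive integers, then for every k with P_k(m) < min Q or P_k(m) > max Q one has #P_k(m) = l_k, and moreover ⋃_{k=1}^r P_k(m) ⊆ [0, s_0+s_1+···+s_n]. -/
/-- `P_k(m) = {z ∈ ℤ : m < z·d ≤ m + l}`, the integers in `(m/d, (m+l)/d]`. -/
def Pset (m : ℤ) (d l : ℕ) : Set ℤ := {z : ℤ | m < z * d ∧ z * d ≤ m + l}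

/-- The set of sums of `p` distinct entries of `s`. -/
def Sset {n : ℕ} (s : Fin (n + 1) → ℕ) (p : ℕ) : Set ℤ :=
  {t : ℤ | ∃ A : Finset (Fin (n + 1)), A.card = p ∧ t = ∑ i ∈ A, (s i : ℤ)}

/-- `q(z) = Σ_{P_k(m) < z} l_k`, where `P_k < z` means `z·d_k > m_k + l_k`. -/
def qval {r : ℕ} (l d : Fin r → ℕ) (m : Fin r → ℤ) (z : ℤ) : ℕ :=
  ∑ k ∈ Finset.univ.filter (fun k => m k + (l k : ℤ) < z * (d k : ℤ)), l k

/-- `N(m) = { p − q(z) : p ∈ [0, n+1], z ∈ Q_p }` with `Q_p = S_p \ ⋃_k P_k(m)`. -/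
def Nset {r n : ℕ} (l d : Fin r → ℕ) (s : Fin (n + 1) → ℕ) (m : Fin r → ℤ) : Set ℤ :=
  {ν : ℤ | ∃ p : ℕ, p ≤ n + 1 ∧ ∃ z : ℤ,
    (z ∈ Sset s p ∧ ∀ k, z ∉ Pset (m k) (d k) (l k)) ∧
    ν = (p : ℤ) - (qval l d m z : ℤ)}

/-- `Q = ⋃_p Q_p`: elements of some `S_p`, `p ≤ n+1`, not covered by any `P_k(m)`. -/
def Qset {r n : ℕ} (l d : Fin r → ℕ) (s : Fin (n + 1) → ℕ) (m : Fin r → ℤ) : Set ℤ :=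
  {z : ℤ | (∃ p ≤ n + 1, z ∈ Sset s p) ∧ ∀ k, z ∉ Pset (m k) (d k) (l k)}

/-!
Write `min Q = ∑_{i ∈ A} s_i` with `#A = p`. Removing the elements of `A` one at a time gives
`p` distinct subset sums below `min Q`; none of them lies in `Q`, so each lies in some `P_k` with
`P_k < min Q`. Those `P_k` have at most `q(min Q)` elements in all, and `q(min Q) ≤ p` because
`p - q(min Q) ∈ N(m) ⊆ {0, 1}`; so the count is tight:
each has exactly `l_k` elements, and together they consist of those subset sums, which lie in
`[0, ∑ s_i]`. Dually, adding the indices outside the support of `max Q` one at a time gives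
`n + 1 - p` sums above `max Q`, covered by the `P_k > max Q`, whose lengths add up to
`n - q(max Q) ≤ n + 1 - p`. Every other `P_k` lies strictly between `min Q` and `max Q`.
-/

open Finset

section SubsetSums

variable {ι M : Type*} [DecidableEq ι]

theorem Finset.exists_card_subset_sums_lt_sum [AddCommMonoid M] [LinearOrder M]
    [IsOrderedCancelAddMonoid M] (f : ι → M) (hf : ∀ i, 0 < f i) (A : Finset ι) :
    ∃ U : Finset M, #U = #A ∧
      ∀ u ∈ U, u < ∑ i ∈ A, f i ∧ ∃ D : Finset ι, u = ∑ i ∈ D, f i := by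
  induction A using Finset.induction_on with
  | empty => exact ⟨∅, rfl, by simp⟩
  | insert a A ha ih =>
    obtain ⟨U, hcard, hU⟩ := ih
    have hlt : ∑ i ∈ A, f i < ∑ i ∈ insert a A, f i := by
      rw [sum_insert ha]
      exact lt_add_of_pos_left _ (hf a)
    refine ⟨insert (∑ i ∈ A, f i) U, ?_, ?_⟩
    · rw [card_insert_of_notMem fun h => (hU _ h).1.false, hcard, card_insert_of_notMem ha]
    · simp only [mem_insert, forall_eq_or_imp]
      exact ⟨⟨hlt, A, rfl⟩, fun u hu => ⟨(hU u hu).1.trans hlt, (hU u hu).2⟩⟩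

theorem Finset.exists_card_subset_sums_gt_sum [Fintype ι] [AddCommGroup M] [LinearOrder M]
    [IsOrderedAddMonoid M] (f : ι → M) (hf : ∀ i, 0 < f i) (A : Finset ι) :
    ∃ U : Finset M, #U = Fintype.card ι - #A ∧
      ∀ u ∈ U, ∑ i ∈ A, f i < u ∧ ∃ D : Finset ι, u = ∑ i ∈ D, f i := by
  obtain ⟨V, hcard, hV⟩ := exists_card_subset_sums_lt_sum f hf Aᶜ
  have hcompl (B : Finset ι) : ∑ i ∈ B, f i = ∑ i, f i - ∑ i ∈ Bᶜ, f i :=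
    eq_sub_of_add_eq (sum_add_sum_compl B f)
  refine ⟨V.image (∑ i, f i - ·), ?_, ?_⟩
  · rw [card_image_of_injective _ sub_right_injective, hcard, card_compl]
  · simp only [mem_image, forall_exists_index, and_imp, forall_apply_eq_imp_iff₂]
    intro v hv
    obtain ⟨hlt, D, rfl⟩ := hV v hv
    refine ⟨hcompl A ▸ sub_lt_sub_left hlt _, Dᶜ, ?_⟩
    rw [hcompl Dᶜ, compl_compl]

end SubsetSums

theorem Finset.card_eq_and_subset_of_subset_biUnion {κ α : Type*} [DecidableEq α]
    {I : Finset κ} {P : κ → Finset α} {l : κ → ℕ} {U : Finset α}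
    (hP : ∀ k ∈ I, #(P k) ≤ l k) (hU : U ⊆ I.biUnion P) (hl : ∑ k ∈ I, l k ≤ #U) :
    ∀ k ∈ I, #(P k) = l k ∧ P k ⊆ U := by
  have hsum : ∑ k ∈ I, #(P k) ≤ ∑ k ∈ I, l k := sum_le_sum hP
  have hcover : #U ≤ ∑ k ∈ I, #(P k) := (card_le_card hU).trans card_biUnion_le
  have hcard := (sum_eq_sum_iff_of_le hP).1 (by omega)
  have hUeq : U = I.biUnion P := eq_of_subset_of_card_le hU (card_biUnion_le.trans (by omega))
  exact fun k hk => ⟨hcard k hk, hUeq ▸ subset_biUnion_of_mem P hk⟩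

section Pset

variable {m w z : ℤ} {d l : ℕ}

noncomputable def Pfinset (m : ℤ) (d l : ℕ) : Finset ℤ := Ioc (m / d) ((m + l) / d)

theorem coe_Pfinset (hd : 0 < d) : (Pfinset m d l : Set ℤ) = Pset m d l := by
  have hd' : (0 : ℤ) < d := by exact_mod_cast hd
  ext z
  simp only [Pfinset, Pset, coe_Ioc, Set.mem_Ioc, Set.mem_ofPred_eq,
    Int.ediv_lt_iff_lt_mul hd', Int.le_ediv_iff_mul_le hd']

theorem card_Pfinset_le (hd : 0 < d) : #(Pfinset m d l) ≤ l := by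
  have hd' : (0 : ℤ) < d := by exact_mod_cast hd
  have hle : (m + l) / d ≤ m / d + l := calc
    (m + l) / d ≤ (m + l * d) / d := Int.ediv_le_ediv hd' (by nlinarith)
    _ = m / d + l := Int.add_mul_ediv_right _ _ hd'.ne'
  rw [Pfinset, Int.card_Ioc]
  omega

theorem notMem_Pset_iff : w ∉ Pset m d l ↔ w * d ≤ m ∨ m + l < w * d := by
  simp only [Pset, Set.mem_ofPred_eq, not_and_or, not_lt, not_le]

theorem lt_of_mem_Pset_of_add_lt (hz : z ∈ Pset m d l) (hw : m + l < w * d) :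
    z < w :=
  lt_of_mul_lt_mul_right (hz.2.trans_lt hw) (Int.natCast_nonneg d)

theorem lt_of_mem_Pset_of_le (hz : z ∈ Pset m d l) (hw : w * d ≤ m) : w < z :=
  lt_of_mul_lt_mul_right (hw.trans_lt hz.1) (Int.natCast_nonneg d)

theorem add_lt_of_mem_Pset_of_lt (hz : z ∈ Pset m d l) (hw : w ∉ Pset m d l)
    (hzw : z < w) : m + l < w * d :=
  (notMem_Pset_iff.1 hw).resolve_left fun h => (lt_of_mem_Pset_of_le hz h).not_gt hzw

theorem le_of_mem_Pset_of_lt (hz : z ∈ Pset m d l) (hw : w ∉ Pset m d l)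
    (hwz : w < z) : w * d ≤ m :=
  (notMem_Pset_iff.1 hw).resolve_right fun h => (lt_of_mem_Pset_of_add_lt hz h).not_gt hwz

theorem Pset_subset_Ioo {w' : ℤ} (hw : w * d ≤ m) (hw' : m + l < w' * d) :
    Pset m d l ⊆ Set.Ioo w w' :=
  fun _ hz => ⟨lt_of_mem_Pset_of_le hz hw, lt_of_mem_Pset_of_add_lt hz hw'⟩

end Pset

section Qset

variable {r n : ℕ} {l d : Fin r → ℕ} {s : Fin (n + 1) → ℕ} {m : Fin r → ℤ} {z : ℤ}

theorem Sset_subset_Icc (p : ℕ) : Sset s p ⊆ Set.Icc 0 (∑ i, (s i : ℤ)) := by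
  rintro _ ⟨A, -, rfl⟩
  exact ⟨sum_nonneg fun i _ => by positivity,
    sum_le_sum_of_subset_of_nonneg (subset_univ A) fun i _ _ => by positivity⟩

theorem Qset_subset_Icc : Qset l d s m ⊆ Set.Icc 0 (∑ i, (s i : ℤ)) := by
  rintro z ⟨⟨p, -, hz⟩, -⟩
  exact Sset_subset_Icc p hz

theorem exists_mem_Pset_of_sum_notMem_Qset {D : Finset (Fin (n + 1))}
    (hD : ∑ i ∈ D, (s i : ℤ) ∉ Qset l d s m) :
    ∃ k, ∑ i ∈ D, (s i : ℤ) ∈ Pset (m k) (d k) (l k) := by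
  by_contra! h
  exact hD ⟨⟨#D, by simpa using card_le_univ D, D, rfl, rfl⟩, h⟩

theorem ncard_Pset_eq_and_subset_of_cover (hd : ∀ k, 0 < d k) {I : Finset (Fin r)}
    {U : Finset ℤ} (hU : ∀ u ∈ U, ∃ k ∈ I, u ∈ Pset (m k) (d k) (l k))
    (hl : ∑ k ∈ I, l k ≤ #U) {k : Fin r} (hk : k ∈ I) :
    (Pset (m k) (d k) (l k)).ncard = l k ∧ Pset (m k) (d k) (l k) ⊆ U := by
  have hsub : U ⊆ I.biUnion fun k => Pfinset (m k) (d k) (l k) := fun u hu => by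
    obtain ⟨k, hk, hu⟩ := hU u hu
    rw [← coe_Pfinset (hd k)] at hu
    exact mem_biUnion.2 ⟨k, hk, hu⟩
  obtain ⟨hcard, hPU⟩ := card_eq_and_subset_of_subset_biUnion
    (fun k _ => card_Pfinset_le (hd k)) hsub hl k hk
  rw [← coe_Pfinset (hd k), Set.ncard_coe_finset]
  exact ⟨hcard, coe_subset.2 hPU⟩

theorem qval_add_sum_filter_le (hsum : ∑ k, l k = n) (hz : ∀ k, z ∉ Pset (m k) (d k) (l k)) :
    qval l d m z + ∑ k ∈ univ.filter (fun k => z * d k ≤ m k), l k = n := by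
  rw [← hsum, ← sum_filter_add_sum_filter_not univ (fun k => m k + (l k : ℤ) < z * d k)]
  congr 1
  refine sum_congr (filter_congr fun k _ => ?_) fun _ _ => rfl
  have := notMem_Pset_iff.1 (hz k)
  constructor <;> intro h <;> omega

theorem ncard_Pset_eq_and_subset_Icc_of_lt_isLeast (hd : ∀ k, 0 < d k) (hs : ∀ i, 0 < s i)
    (hsub : Nset l d s m ⊆ {0, 1}) (hz : IsLeast (Qset l d s m) z) {k : Fin r}
    (hk : m k + l k < z * d k) :
    (Pset (m k) (d k) (l k)).ncard = l k ∧
      Pset (m k) (d k) (l k) ⊆ Set.Icc 0 (∑ i, (s i : ℤ)) := by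
  obtain ⟨⟨p, hp, A, hA, rfl⟩, hzP⟩ := hz.1
  have hq : qval l d m (∑ i ∈ A, (s i : ℤ)) ≤ p := by
    have := hsub ⟨p, hp, _, ⟨⟨A, hA, rfl⟩, hzP⟩, rfl⟩
    simp only [Set.mem_insert_iff, Set.mem_singleton_iff] at this
    omega
  obtain ⟨U, hUcard, hU⟩ :=
    exists_card_subset_sums_lt_sum (fun i => (s i : ℤ)) (by simpa using hs) A
  have hcover : ∀ u ∈ U, ∃ k ∈ univ.filter (fun k => m k + l k < (∑ i ∈ A, (s i : ℤ)) * d k),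
      u ∈ Pset (m k) (d k) (l k) := by
    intro u hu
    obtain ⟨hlt, D, rfl⟩ := hU u hu
    obtain ⟨k, hk⟩ := exists_mem_Pset_of_sum_notMem_Qset fun hQ => (hz.2 hQ).not_gt hlt
    exact ⟨k, mem_filter.2 ⟨mem_univ k, add_lt_of_mem_Pset_of_lt hk (hzP k) hlt⟩, hk⟩
  obtain ⟨hcard, hPU⟩ := ncard_Pset_eq_and_subset_of_cover hd hcover (hUcard ▸ hA ▸ hq)
    (mem_filter.2 ⟨mem_univ k, hk⟩)
  refine ⟨hcard, hPU.trans fun u hu => ?_⟩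
  obtain ⟨-, D, rfl⟩ := hU u hu
  exact Sset_subset_Icc _ ⟨D, rfl, rfl⟩

theorem ncard_Pset_eq_and_subset_Icc_of_isGreatest_le (hd : ∀ k, 0 < d k)
    (hsum : ∑ k, l k = n) (hs : ∀ i, 0 < s i) (hsub : Nset l d s m ⊆ {0, 1})
    (hz : IsGreatest (Qset l d s m) z) {k : Fin r} (hk : z * d k ≤ m k) :
    (Pset (m k) (d k) (l k)).ncard = l k ∧
      Pset (m k) (d k) (l k) ⊆ Set.Icc 0 (∑ i, (s i : ℤ)) := by
  obtain ⟨⟨p, hp, A, hA, rfl⟩, hzP⟩ := hz.1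
  have hq : (p : ℤ) - qval l d m (∑ i ∈ A, (s i : ℤ)) ≤ 1 := by
    have := hsub ⟨p, hp, _, ⟨⟨A, hA, rfl⟩, hzP⟩, rfl⟩
    simp only [Set.mem_insert_iff, Set.mem_singleton_iff] at this
    omega
  have hsplit := qval_add_sum_filter_le hsum hzP
  obtain ⟨U, hUcard, hU⟩ :=
    exists_card_subset_sums_gt_sum (fun i => (s i : ℤ)) (by simpa using hs) A
  rw [Fintype.card_fin, hA] at hUcard
  have hcover : ∀ u ∈ U, ∃ k ∈ univ.filter (fun k => (∑ i ∈ A, (s i : ℤ)) * d k ≤ m k),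
      u ∈ Pset (m k) (d k) (l k) := by
    intro u hu
    obtain ⟨hlt, D, rfl⟩ := hU u hu
    obtain ⟨k, hk⟩ := exists_mem_Pset_of_sum_notMem_Qset fun hQ => (hz.2 hQ).not_gt hlt
    exact ⟨k, mem_filter.2 ⟨mem_univ k, le_of_mem_Pset_of_lt hk (hzP k) hlt⟩, hk⟩
  obtain ⟨hcard, hPU⟩ := ncard_Pset_eq_and_subset_of_cover hd hcover (by omega)
    (mem_filter.2 ⟨mem_univ k, hk⟩)
  refine ⟨hcard, hPU.trans fun u hu => ?_⟩
  obtain ⟨-, D, rfl⟩ := hU u hu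
  exact Sset_subset_Icc _ ⟨D, rfl, rfl⟩

end Qset

theorem stmt8_general (r n : ℕ) (l d : Fin r → ℕ)
    (hd : ∀ k, 1 ≤ d k) (hsum : ∑ k, l k = n)
    (s : Fin (n + 1) → ℕ) (hs : ∀ i, 0 < s i)
    (m : Fin r → ℤ) (hsub : Nset l d s m ⊆ {0, 1})
    (hcons : ∃ ν : ℤ, ν ∈ Nset l d s m ∧ ν + 1 ∈ Nset l d s m) :
    (∀ k : Fin r,
      ((∃ z1 : ℤ, IsLeast (Qset l d s m) z1 ∧ m k + (l k : ℤ) < z1 * (d k : ℤ)) ∨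
       (∃ z2 : ℤ, IsGreatest (Qset l d s m) z2 ∧ z2 * (d k : ℤ) ≤ m k)) →
      (Pset (m k) (d k) (l k)).ncard = l k) ∧
    (⋃ k, Pset (m k) (d k) (l k)) ⊆ Set.Icc (0 : ℤ) (∑ i, (s i : ℤ)) := by
  have hQ : (Qset l d s m).Nonempty := by
    obtain ⟨-, ⟨p, hp, z, ⟨hzS, hzP⟩, -⟩, -⟩ := hcons
    exact ⟨z, ⟨p, hp, hzS⟩, hzP⟩
  have hQIcc := Qset_subset_Icc (l := l) (d := d) (s := s) (m := m)
  obtain ⟨z₁, hz₁⟩ := BddBelow.exists_isLeast_of_nonempty ⟨0, fun z hz => (hQIcc hz).1⟩ hQ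
  obtain ⟨z₂, hz₂⟩ := BddAbove.exists_isGreatest_of_nonempty ⟨_, fun z hz => (hQIcc hz).2⟩ hQ
  refine ⟨fun k hk => ?_, Set.iUnion_subset fun k => ?_⟩
  · rcases hk with ⟨z, hz, hk⟩ | ⟨z, hz, hk⟩
    · exact (ncard_Pset_eq_and_subset_Icc_of_lt_isLeast hd hs hsub hz hk).1
    · exact (ncard_Pset_eq_and_subset_Icc_of_isGreatest_le hd hsum hs hsub hz hk).1
  rcases notMem_Pset_iff.1 (hz₁.1.2 k) with h₁ | h₁
  · rcases notMem_Pset_iff.1 (hz₂.1.2 k) with h₂ | h₂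
    · exact (ncard_Pset_eq_and_subset_Icc_of_isGreatest_le hd hsum hs hsub hz₂ h₂).2
    · exact (Pset_subset_Ioo h₁ h₂).trans
        (Set.Ioo_subset_Icc_self.trans (Set.Icc_subset_Icc (hQIcc hz₁.1).1 (hQIcc hz₂.1).2))
  · exact (ncard_Pset_eq_and_subset_Icc_of_lt_isLeast hd hs hsub hz₁ h₁).2

theorem stmt8 (r n : ℕ) (hr : 1 ≤ r) (l d : Fin r → ℕ)
    (hl : ∀ k, 1 ≤ l k) (hd : ∀ k, 1 ≤ d k) (hsum : ∑ k, l k = n)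
    (s : Fin (n + 1) → ℕ) (hs : ∀ i, 0 < s i) (hmono : Monotone s)
    (m : Fin r → ℤ) (hsub : Nset l d s m ⊆ {0, 1})
    (hcons : ∃ ν : ℤ, ν ∈ Nset l d s m ∧ ν + 1 ∈ Nset l d s m) :
    (∀ k : Fin r,
      ((∃ z1 : ℤ, IsLeast (Qset l d s m) z1 ∧ m k + (l k : ℤ) < z1 * (d k : ℤ)) ∨
       (∃ z2 : ℤ, IsGreatest (Qset l d s m) z2 ∧ z2 * (d k : ℤ) ≤ m k)) →
      (Pset (m k) (d k) (l k)).ncard = l k) ∧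
    (⋃ k, Pset (m k) (d k) (l k)) ⊆ Set.Icc (0 : ℤ) (∑ i, (s i : ℤ)) :=
  stmt8_general r n l d hd hsum s hs m hsub hcons
end

section
/- With the setup of the combinatorial determinantal condition: if m ∈ ℤ^r is determinantal (i.e. N(m) = {0,1}), then for every k ∈ {1,...,r}: max(−d_k, −l_k) ≤ m_k ≤ d_k (s_0+···+s_n) − 1 + min(d_k − l_k, 0). -/
open Finset

lemma card_le_of_forall_mem_Pset {m : ℤ} {d l : ℕ} (hd : 0 < d) {C : Finset ℤ}
    (hC : ∀ x ∈ C, x ∈ Pset m d l) : #C ≤ l := by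
  have hd' : (0 : ℤ) < d := by exact_mod_cast hd
  calc #C ≤ #(Ico (0 : ℤ) l) := by
        refine card_le_card_of_injOn (fun x => x * d - m - 1) (fun x hx => ?_) ?_
        · obtain ⟨h₁, h₂⟩ := hC x hx
          simp only [coe_Ico, Set.mem_Ico]
          omega
        · intro x _ y _ hxy
          exact mul_right_cancel₀ hd'.ne' (by simpa using hxy)
    _ = l := by simp

section Covering

variable {r : ℕ} (l d : Fin r → ℕ) (m : Fin r → ℤ)

def Covered (x : ℤ) : Prop := ∃ k, x ∈ Pset (m k) (d k) (l k)

variable {l d m}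

lemma card_add_sum_le_sum (hd : ∀ k, 0 < d k) {B K₀ : Finset (Fin r)} (hK₀ : K₀ ⊆ B)
    {C : Finset ℤ} (hC : ∀ x ∈ C, ∃ k ∈ B \ K₀, x ∈ Pset (m k) (d k) (l k)) :
    #C + ∑ k ∈ K₀, l k ≤ ∑ k ∈ B, l k := by
  classical
  have hcover : C ⊆ (B \ K₀).biUnion (fun k => {x ∈ C | x ∈ Pset (m k) (d k) (l k)}) := by
    intro x hx
    obtain ⟨k, hk, hxk⟩ := hC x hx
    exact mem_biUnion.mpr ⟨k, hk, mem_filter.mpr ⟨hx, hxk⟩⟩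
  have hcard : #C ≤ ∑ k ∈ B \ K₀, l k :=
    calc #C ≤ _ := card_le_card hcover
      _ ≤ _ := card_biUnion_le
      _ ≤ _ := sum_le_sum fun k _ =>
        card_le_of_forall_mem_Pset (hd k) fun x hx => (mem_filter.mp hx).2
  rw [← sum_sdiff hK₀]
  omega

lemma lt_mul_of_mem_Pset_of_lt {z x : ℤ} (hz : ¬ Covered l d m z) {k : Fin r}
    (hx : x ∈ Pset (m k) (d k) (l k)) (hxz : x < z) : m k + l k < z * d k := by
  by_contra! h
  have : x * d k ≤ z * d k := mul_le_mul_of_nonneg_right hxz.le (by positivity)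
  exact hz ⟨k, lt_of_lt_of_le hx.1 this, h⟩

lemma mul_le_of_mem_Pset_of_lt {z x : ℤ} {k : Fin r}
    (hx : x ∈ Pset (m k) (d k) (l k)) (hzx : z < x) : z * d k ≤ m k + l k :=
  (mul_le_mul_of_nonneg_right hzx.le (by positivity)).trans hx.2

lemma card_add_sum_le_qval (hd : ∀ k, 0 < d k) {z : ℤ} (hz : ¬ Covered l d m z)
    {K₀ : Finset (Fin r)} (hK₀ : ∀ k ∈ K₀, m k + l k < z * d k) {C : Finset ℤ}
    (hC : ∀ x ∈ C, x < z ∧ Covered l d m x)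
    (hdisj : ∀ x ∈ C, ∀ k ∈ K₀, x ∉ Pset (m k) (d k) (l k)) :
    #C + ∑ k ∈ K₀, l k ≤ qval l d m z := by
  refine card_add_sum_le_sum (m := m) hd (fun k hk => by simpa using hK₀ k hk) fun x hx => ?_
  obtain ⟨hxz, k, hk⟩ := hC x hx
  exact ⟨k, by simpa [lt_mul_of_mem_Pset_of_lt hz hk hxz] using fun h => hdisj x hx k h hk, hk⟩

lemma qval_add_card_add_sum_le {z : ℤ} (hd : ∀ k, 0 < d k)
    {K₀ : Finset (Fin r)} (hK₀ : ∀ k ∈ K₀, z * d k ≤ m k + l k) {C : Finset ℤ}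
    (hC : ∀ x ∈ C, z < x ∧ Covered l d m x)
    (hdisj : ∀ x ∈ C, ∀ k ∈ K₀, x ∉ Pset (m k) (d k) (l k)) :
    qval l d m z + #C + ∑ k ∈ K₀, l k ≤ ∑ k, l k := by
  have hcount : #C + ∑ k ∈ K₀, l k ≤ ∑ k with ¬ m k + l k < z * d k, l k := by
    refine card_add_sum_le_sum (m := m) hd (fun k hk => by simpa using hK₀ k hk) fun x hx => ?_
    obtain ⟨hzx, k, hk⟩ := hC x hx
    exact ⟨k, by simpa [mul_le_of_mem_Pset_of_lt hk hzx] using fun h => hdisj x hx k h hk, hk⟩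
  rw [qval, ← sum_filter_add_sum_filter_not univ (fun k => m k + (l k : ℤ) < z * d k)]
  omega

end Covering

section PrefixSum

variable {n : ℕ} (s : Fin (n + 1) → ℕ)

def prefixSum (p : ℕ) : ℤ :=
  ∑ i ∈ univ.filter (fun i : Fin (n + 1) => (i : ℕ) < p), (s i : ℤ)

lemma prefixSum_nonneg (p : ℕ) : 0 ≤ prefixSum s p := by
  unfold prefixSum; positivity

lemma prefixSum_mem_Sset {p : ℕ} (hp : p ≤ n + 1) : prefixSum s p ∈ Sset s p :=
  ⟨univ.filter (fun i : Fin (n + 1) => (i : ℕ) < p),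
    by rw [Fin.card_filter_val_lt, min_eq_right hp], rfl⟩

lemma prefixSum_le_sum (p : ℕ) : prefixSum s p ≤ ∑ i, (s i : ℤ) :=
  sum_le_univ_sum_of_nonneg fun i => Int.natCast_nonneg (s i)

lemma prefixSum_strictMonoOn (hs : ∀ i, 0 < s i) :
    StrictMonoOn (prefixSum s) (Set.Iic (n + 1)) := by
  intro p _ q hq hpq
  have hpn : p < n + 1 := lt_of_lt_of_le hpq hq
  refine sum_lt_sum_of_subset (i := ⟨p, hpn⟩) (fun i hi => ?_) (by simpa using hpq) (by simp)
    (by exact_mod_cast hs _) fun i _ _ => Int.natCast_nonneg (s i)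
  simp only [mem_filter, mem_univ, true_and] at hi ⊢
  omega

lemma card_image_prefixSum (hs : ∀ i, 0 < s i) {P : Finset ℕ} (hP : ∀ p ∈ P, p ≤ n + 1) :
    #(P.image (prefixSum s)) = #P :=
  card_image_of_injOn ((prefixSum_strictMonoOn s hs).injOn.mono hP)

end PrefixSum

section Bounds

variable {r n : ℕ} {l d : Fin r → ℕ} {m : Fin r → ℤ} {s : Fin (n + 1) → ℕ}

lemma qval_le_and_le_qval_add_one (hdet : Nset l d s m = {0, 1}) {p : ℕ} (hp : p ≤ n + 1)
    {z : ℤ} (hzS : z ∈ Sset s p) (hz : ¬ Covered l d m z) :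
    (qval l d m z : ℤ) ≤ p ∧ (p : ℤ) ≤ qval l d m z + 1 := by
  have hmem : (p : ℤ) - qval l d m z ∈ Nset l d s m :=
    ⟨p, hp, z, ⟨hzS, fun k hk => hz ⟨k, hk⟩⟩, rfl⟩
  rw [hdet] at hmem
  simp only [Set.mem_insert_iff, Set.mem_singleton_iff] at hmem
  omega

lemma exists_not_covered_prefixSum (hd : ∀ k, 0 < d k) (hs : ∀ i, 0 < s i)
    (hsum : ∑ k, l k = n) : ∃ p, p ≤ n + 1 ∧ ¬ Covered l d m (prefixSum s p) := by
  by_contra! hcov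
  -- `n + 2` distinct points cannot be covered by intervals of total length `n`
  have := card_add_sum_le_sum (l := l) (m := m) (B := univ) (K₀ := ∅)
    (C := (range (n + 2)).image (prefixSum s)) hd (empty_subset _) ?_
  · rw [card_image_prefixSum s hs fun j hj => by have := mem_range.mp hj; omega, card_range] at this
    simp only [sum_empty] at this
    omega
  · simp only [mem_image, mem_range, sdiff_empty, mem_univ, true_and]
    rintro _ ⟨j, hj, rfl⟩
    exact hcov j (by omega)

lemma max_neg_le_of_covered_below (hd : ∀ k, 0 < d k) (hs : ∀ i, 0 < s i) {k : Fin r}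
    (hl : 1 ≤ l k) {p : ℕ} (hp : p ≤ n + 1) (hz : ¬ Covered l d m (prefixSum s p))
    (hcov : ∀ j < p, Covered l d m (prefixSum s j))
    (hq : (qval l d m (prefixSum s p) : ℤ) ≤ p) :
    max (-(d k : ℤ)) (-(l k : ℤ)) ≤ m k := by
  set z := prefixSum s p
  set C := (range p).image (prefixSum s)
  have hC : #C = p := by
    rw [card_image_prefixSum s hs fun j hj => by have := mem_range.mp hj; omega, card_range]
  have hCmem : ∀ x ∈ C, (0 ≤ x ∧ x < z) ∧ Covered l d m x := by
    simp only [C, mem_image, mem_range]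
    rintro _ ⟨j, hj, rfl⟩
    have hjp := prefixSum_strictMonoOn s hs (Set.mem_Iic.mpr (by omega)) hp hj
    exact ⟨⟨prefixSum_nonneg s j, hjp⟩, hcov j hj⟩
  have hz₀ : 0 ≤ z := prefixSum_nonneg s p
  have hzd₀ : 0 ≤ z * d k := mul_nonneg hz₀ (by positivity)
  by_contra! hm
  by_cases hlow : m k + l k < 0
  · -- the whole interval `P_k` lies below `0`, hence below `z` and away from `C`
    have := card_add_sum_le_qval (K₀ := {k}) hd hz (by simp only [mem_singleton, forall_eq]; omega)
      (fun x hx => ⟨(hCmem x hx).1.2, (hCmem x hx).2⟩) fun x hx j hj hxj => by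
        have : 0 ≤ x * d j := mul_nonneg (hCmem x hx).1.1 (by positivity)
        simp only [mem_singleton] at hj
        subst hj
        exact absurd hxj.2 (by omega)
    simp only [sum_singleton] at this
    omega
  · -- otherwise `m k < -d k`, so `-1 ∈ P_k` is a covered point below `z` outside `C`
    have hmd : m k < -(d k : ℤ) := (lt_max_iff.mp hm).resolve_right (by omega)
    have hneg : (-1 : ℤ) ∈ Pset (m k) (d k) (l k) := by constructor <;> linarith
    have hnot : (-1 : ℤ) ∉ C := fun h => by have := (hCmem _ h).1.1; omega
    have := card_add_sum_le_qval (K₀ := ∅) (C := insert (-1) C) hd hz (by simp) ?_ (by simp)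
    · rw [card_insert_of_notMem hnot] at this
      simp only [sum_empty] at this
      omega
    · simp only [mem_insert, forall_eq_or_imp]
      exact ⟨⟨by omega, k, hneg⟩, fun x hx => ⟨(hCmem x hx).1.2, (hCmem x hx).2⟩⟩

lemma le_of_covered_above (hd : ∀ k, 0 < d k) (hs : ∀ i, 0 < s i) (hsum : ∑ k, l k = n)
    {k : Fin r} (hl : 1 ≤ l k) {p : ℕ} (hp : p ≤ n + 1)
    (hcov : ∀ j, p < j → j ≤ n + 1 → Covered l d m (prefixSum s j))
    (hq : (p : ℤ) ≤ qval l d m (prefixSum s p) + 1) :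
    m k ≤ (d k : ℤ) * (∑ i, (s i : ℤ)) - 1 + min ((d k : ℤ) - (l k : ℤ)) 0 := by
  set S := ∑ i, (s i : ℤ)
  set z := prefixSum s p
  set C := (Ioc p (n + 1)).image (prefixSum s)
  have hC : #C = n + 1 - p := by
    rw [card_image_prefixSum s hs fun j hj => (mem_Ioc.mp hj).2, Nat.card_Ioc]
  have hCmem : ∀ x ∈ C, (z < x ∧ x ≤ S) ∧ Covered l d m x := by
    simp only [C, mem_image, mem_Ioc]
    rintro _ ⟨j, ⟨hpj, hj⟩, rfl⟩
    exact ⟨⟨prefixSum_strictMonoOn s hs hp hj hpj, prefixSum_le_sum s j⟩, hcov j hpj hj⟩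
  have hzS : z * d k ≤ S * d k :=
    mul_le_mul_of_nonneg_right (prefixSum_le_sum s p) (by positivity)
  by_contra! hm
  by_cases hhigh : S * d k ≤ m k
  · -- the whole interval `P_k` lies above `S`, hence above `z` and away from `C`
    have := qval_add_card_add_sum_le (K₀ := {k}) hd (by simp only [mem_singleton, forall_eq]; omega)
      (fun x hx => ⟨(hCmem x hx).1.1, (hCmem x hx).2⟩) fun x hx j hj hxj => by
        have : x * d j ≤ S * d j := mul_le_mul_of_nonneg_right (hCmem x hx).1.2 (by positivity)
        simp only [mem_singleton] at hj
        subst hj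
        exact absurd hxj.1 (by omega)
    simp only [sum_singleton] at this
    omega
  · -- otherwise `S + 1 ∈ P_k` is a covered point above `z` outside `C`
    have hS₁ : S + 1 ∈ Pset (m k) (d k) (l k) := by
      constructor <;> rcases min_cases ((d k : ℤ) - l k) 0 with h | h <;> linarith
    have hnot : S + 1 ∉ C := fun h => by have := (hCmem _ h).1.2; omega
    have := qval_add_card_add_sum_le (l := l) (m := m) (z := z) (K₀ := ∅)
      (C := insert (S + 1) C) hd (by simp) ?_ (by simp)
    · rw [card_insert_of_notMem hnot] at this
      simp only [sum_empty] at this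
      omega
    · simp only [mem_insert, forall_eq_or_imp]
      exact ⟨⟨by linarith [prefixSum_le_sum s p], k, hS₁⟩,
        fun x hx => ⟨(hCmem x hx).1.1, (hCmem x hx).2⟩⟩

end Bounds

theorem stmt9_general (r n : ℕ) (l d : Fin r → ℕ)
    (hl : ∀ k, 1 ≤ l k) (hd : ∀ k, 1 ≤ d k) (hsum : ∑ k, l k = n)
    (s : Fin (n + 1) → ℕ) (hs : ∀ i, 0 < s i)
    (m : Fin r → ℤ) (hdet : Nset l d s m = {0, 1}) (k : Fin r) :
    max (-(d k : ℤ)) (-(l k : ℤ)) ≤ m k ∧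
    m k ≤ (d k : ℤ) * (∑ i, (s i : ℤ)) - 1 + min ((d k : ℤ) - (l k : ℤ)) 0 := by
  classical
  have hex := exists_not_covered_prefixSum (m := m) hd hs hsum
  set p₁ := Nat.find hex
  set p₂ := Nat.findGreatest (fun p => ¬ Covered l d m (prefixSum s p)) (n + 1)
  obtain ⟨hp₁, hz₁⟩ : p₁ ≤ n + 1 ∧ ¬ Covered l d m (prefixSum s p₁) :=
    Nat.find_spec hex
  have hp₂ : p₂ ≤ n + 1 := Nat.findGreatest_le _
  have hz₂ : ¬ Covered l d m (prefixSum s p₂) :=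
    Nat.findGreatest_spec (P := fun p => ¬ Covered l d m (prefixSum s p)) hp₁ hz₁
  constructor
  · refine max_neg_le_of_covered_below hd hs (hl k) hp₁ hz₁ (fun j hj => ?_)
      (qval_le_and_le_qval_add_one hdet hp₁ (prefixSum_mem_Sset s hp₁) hz₁).1
    by_contra hj'
    exact Nat.find_min hex hj ⟨by omega, hj'⟩
  · refine le_of_covered_above hd hs hsum (hl k) hp₂ (fun j hj hjn => ?_)
      (qval_le_and_le_qval_add_one hdet hp₂ (prefixSum_mem_Sset s hp₂) hz₂).2
    by_contra hj'
    exact Nat.findGreatest_is_greatest hj hjn hj'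

theorem stmt9 (r n : ℕ) (hr : 1 ≤ r) (l d : Fin r → ℕ)
    (hl : ∀ k, 1 ≤ l k) (hd : ∀ k, 1 ≤ d k) (hsum : ∑ k, l k = n)
    (s : Fin (n + 1) → ℕ) (hs : ∀ i, 0 < s i) (hmono : Monotone s)
    (m : Fin r → ℤ) (hdet : Nset l d s m = {0, 1}) (k : Fin r) :
    max (-(d k : ℤ)) (-(l k : ℤ)) ≤ m k ∧
    m k ≤ (d k : ℤ) * (∑ i, (s i : ℤ)) - 1 + min ((d k : ℤ) - (l k : ℤ)) 0 :=
  stmt9_general r n l d hl hd hsum s hs m hdet k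
end

section
/- Existence direction of the characterization of determinantal data (identity permutation): with l_k ≥ 1, Σ l_k = n, d_k ≥ 1, s_0 ≤ ··· ≤ s_n positive integers, write Id[k] = l_1+···+l_k, L_k = s_0+···+s_{Id[k−1]+1} and R_k = s_{n−Id[k]+2}+···+s_n. If d_k R_k − l_k < d_k L_k for all k, then any m ∈ ℤ^r with d_k R_k − l_k ≤ m_k ≤ d_k L_k − 1 for all k is determinantal, i.e. N(m) = {0,1}. -/
/-- `Id[k] = l_1 + ⋯ + l_k` (inclusive partial sum in the `Fin r` order). -/
def IdS {r : ℕ} (l : Fin r → ℕ) (k : Fin r) : ℕ :=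
  ∑ i ∈ Finset.univ.filter (fun i : Fin r => i ≤ k), l i

/-- `Id[k-1] = l_1 + ⋯ + l_{k-1}` (strict partial sum). -/
def IdSlt {r : ℕ} (l : Fin r → ℕ) (k : Fin r) : ℕ :=
  ∑ i ∈ Finset.univ.filter (fun i : Fin r => i < k), l i

/-- `L_k = s_0 + ⋯ + s_{Id[k-1]+1}` = min S_{Id[k-1]+2}. -/
def Lval {r n : ℕ} (l : Fin r → ℕ) (s : Fin (n + 1) → ℕ) (k : Fin r) : ℤ :=
  ∑ j ∈ Finset.univ.filter (fun j : Fin (n + 1) => (j : ℕ) ≤ IdSlt l k + 1), (s j : ℤ)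

/-- `R_k = s_{n-Id[k]+2} + ⋯ + s_n` = max S_{Id[k]-1}. -/
def Rval {r n : ℕ} (l : Fin r → ℕ) (s : Fin (n + 1) → ℕ) (k : Fin r) : ℤ :=
  ∑ j ∈ Finset.univ.filter (fun j : Fin (n + 1) => n + 2 ≤ (j : ℕ) + IdS l k), (s j : ℤ)

open Finset

theorem Finset.sum_le_sum_of_card_eq_of_forall_sdiff_le {ι M : Type*} [DecidableEq ι]
    [AddCommMonoid M] [LinearOrder M] [IsOrderedCancelAddMonoid M] {s t : Finset ι}
    {f : ι → M} (hcard : #s = #t) (h : ∀ i ∈ s \ t, ∀ j ∈ t \ s, f i ≤ f j) :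
    ∑ i ∈ s, f i ≤ ∑ i ∈ t, f i := by
  rw [← sum_sdiff_le_sum_sdiff]
  obtain hst | hst := (s \ t).eq_empty_or_nonempty
  · have hts : t \ s = ∅ := by rw [← card_eq_zero, ← card_sdiff_comm hcard, hst, card_empty]
    simp [hst, hts]
  obtain ⟨i, hi, hmax⟩ := exists_max_image _ f hst
  calc ∑ j ∈ s \ t, f j ≤ #(s \ t) • f i := sum_le_card_nsmul _ _ _ hmax
    _ = #(t \ s) • f i := by rw [card_sdiff_comm hcard]
    _ ≤ ∑ j ∈ t \ s, f j := card_nsmul_le_sum _ _ _ (h i hi)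

section PartialSums

variable {r : ℕ} (l : Fin r → ℕ)

theorem sum_filter_IdS_le (p : ℕ) : ∑ k ∈ univ.filter (fun k => IdS l k ≤ p), l k ≤ p := by
  obtain h | hne := (univ.filter (fun k => IdS l k ≤ p)).eq_empty_or_nonempty
  · simp [h]
  calc ∑ k ∈ univ.filter (fun k => IdS l k ≤ p), l k ≤ IdS l (max' _ hne) :=
        sum_le_sum_of_subset fun k hk => mem_filter.2 ⟨mem_univ _, le_max' _ _ hk⟩
    _ ≤ p := (mem_filter.1 (max'_mem _ hne)).2

theorem le_sum_filter_IdSlt_lt {p : ℕ} (hp : p ≤ ∑ k, l k) :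
    p ≤ ∑ k ∈ univ.filter (fun k => IdSlt l k < p), l k := by
  have hsplit := sum_filter_add_sum_filter_not univ (fun k => IdSlt l k < p) l
  suffices ∑ k ∈ univ.filter (fun k => ¬ IdSlt l k < p), l k ≤ (∑ k, l k) - p by omega
  obtain h | hne := (univ.filter (fun k => ¬ IdSlt l k < p)).eq_empty_or_nonempty
  · rw [h, sum_empty]
    exact Nat.zero_le _
  set j := min' _ hne
  have hj : p ≤ IdSlt l j := not_lt.1 (mem_filter.1 (min'_mem _ hne)).2
  have hstart := sum_filter_add_sum_filter_not univ (· < j) l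
  calc ∑ k ∈ univ.filter (fun k => ¬ IdSlt l k < p), l k
        ≤ ∑ k ∈ univ.filter (fun k => ¬ k < j), l k :=
        sum_le_sum_of_subset fun k hk => mem_filter.2 ⟨mem_univ _, not_lt.2 (min'_le _ _ hk)⟩
    _ ≤ (∑ k, l k) - p := by unfold IdSlt at hj; omega

end PartialSums

section ExtremeSums

variable {n : ℕ} (s : Fin (n + 1) → ℕ)

def sumFirst (t : ℕ) : ℤ := ∑ j ∈ univ.filter (fun j : Fin (n + 1) => (j : ℕ) < t), (s j : ℤ)

def sumLast (t : ℕ) : ℤ := ∑ j ∈ univ.filter (fun j : Fin (n + 1) => n + 1 ≤ (j : ℕ) + t), (s j : ℤ)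

theorem Lval_eq_sumFirst {r : ℕ} (l : Fin r → ℕ) (k : Fin r) :
    Lval l s k = sumFirst s (IdSlt l k + 2) := by
  unfold Lval sumFirst
  congr 1
  ext j
  simp only [mem_filter, mem_univ, true_and]
  omega

theorem Rval_eq_sumLast {r : ℕ} (l : Fin r → ℕ) (k : Fin r) :
    Rval l s k = sumLast s (IdS l k - 1) := by
  unfold Rval sumLast
  congr 1
  ext j
  simp only [mem_filter, mem_univ, true_and]
  omega

theorem card_filter_le_val_add {t : ℕ} (ht : t ≤ n + 1) :
    #(univ.filter (fun j : Fin (n + 1) => n + 1 ≤ (j : ℕ) + t)) = t := by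
  have hsplit := card_filter_add_card_filter_not (s := (univ : Finset (Fin (n + 1))))
    (fun j : Fin (n + 1) => n + 1 ≤ (j : ℕ) + t)
  have hlow : univ.filter (fun j : Fin (n + 1) => ¬ n + 1 ≤ (j : ℕ) + t) =
      univ.filter (fun j : Fin (n + 1) => (j : ℕ) < n + 1 - t) := by
    ext j
    simp only [mem_filter, mem_univ, true_and]
    omega
  rw [hlow, Fin.card_filter_val_lt, card_univ, Fintype.card_fin] at hsplit
  omega

theorem sumFirst_mem_Sset {t : ℕ} (ht : t ≤ n + 1) : sumFirst s t ∈ Sset s t :=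
  ⟨_, by rw [Fin.card_filter_val_lt]; omega, rfl⟩

theorem sumLast_mem_Sset {t : ℕ} (ht : t ≤ n + 1) : sumLast s t ∈ Sset s t :=
  ⟨_, card_filter_le_val_add ht, rfl⟩

theorem sumFirst_mono : Monotone (sumFirst s) := fun _ _ h =>
  sum_le_sum_of_subset_of_nonneg (monotone_filter_right _ fun _ _ hj => by omega)
    fun _ _ _ => Int.natCast_nonneg _

theorem sumLast_mono : Monotone (sumLast s) := fun _ _ h =>
  sum_le_sum_of_subset_of_nonneg (monotone_filter_right _ fun _ _ hj => by omega)
    fun _ _ _ => Int.natCast_nonneg _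

variable {s}

theorem sumFirst_lt_sumFirst (hs : ∀ i, 0 < s i) {t t' : ℕ} (h : t < t') (ht' : t' ≤ n + 1) :
    sumFirst s t < sumFirst s t' := by
  refine sum_lt_sum_of_subset (i := ⟨t, by omega⟩) ?_ ?_ ?_ (by exact_mod_cast hs _)
    fun _ _ _ => Int.natCast_nonneg _
  · exact monotone_filter_right _ fun _ _ hj => by omega
  · simpa using h
  · simp

theorem sumLast_lt_sumLast (hs : ∀ i, 0 < s i) {t t' : ℕ} (h : t < t') (ht' : t' ≤ n + 1) :
    sumLast s t < sumLast s t' := by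
  refine sum_lt_sum_of_subset (i := ⟨n + 1 - t', by omega⟩) ?_ ?_ ?_ (by exact_mod_cast hs _)
    fun _ _ _ => Int.natCast_nonneg _
  · exact monotone_filter_right _ fun _ _ hj => by omega
  · simp only [mem_filter, mem_univ, true_and]
    omega
  · simp only [mem_filter, mem_univ, true_and, not_le]
    omega

theorem sumFirst_le_of_mem_Sset (hmono : Monotone s) {t : ℕ} {z : ℤ} (hz : z ∈ Sset s t) :
    sumFirst s t ≤ z := by
  obtain ⟨A, rfl, rfl⟩ := hz
  refine sum_le_sum_of_card_eq_of_forall_sdiff_le ?_ fun i hi j hj => ?_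
  · have := A.card_le_univ
    rw [Fin.card_filter_val_lt, Fintype.card_fin] at *
    omega
  · simp only [mem_sdiff, mem_filter, mem_univ, true_and] at hi hj
    exact_mod_cast hmono (Fin.le_def.2 (by omega))

theorem le_sumLast_of_mem_Sset (hmono : Monotone s) {t : ℕ} {z : ℤ} (hz : z ∈ Sset s t) :
    z ≤ sumLast s t := by
  obtain ⟨A, rfl, rfl⟩ := hz
  have := A.card_le_univ
  rw [Fintype.card_fin] at this
  refine sum_le_sum_of_card_eq_of_forall_sdiff_le (card_filter_le_val_add this).symm
    fun i hi j hj => ?_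
  simp only [mem_sdiff, mem_filter, mem_univ, true_and] at hi hj
  exact_mod_cast hmono (Fin.le_def.2 (by omega))

end ExtremeSums

section Blocking

instance Pset.decidableMem (m₀ z : ℤ) (d₀ l₀ : ℕ) : Decidable (z ∈ Pset m₀ d₀ l₀) :=
  inferInstanceAs (Decidable (m₀ < z * d₀ ∧ z * d₀ ≤ m₀ + l₀))

variable {r : ℕ} (l d : Fin r → ℕ) (m : Fin r → ℤ)

theorem card_filter_mem_Pset_le {ι : Type*} (T : Finset ι) {g : ι → ℤ} (hg : Set.InjOn g T)
    {m₀ : ℤ} {d₀ l₀ : ℕ} (hd₀ : 0 < d₀) : #(T.filter (fun j => g j ∈ Pset m₀ d₀ l₀)) ≤ l₀ := by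
  have hd₀' : (d₀ : ℤ) ≠ 0 := by exact_mod_cast hd₀.ne'
  calc #(T.filter (fun j => g j ∈ Pset m₀ d₀ l₀)) ≤ #(Ioc m₀ (m₀ + l₀)) := by
        refine card_le_card_of_injOn (fun j => g j * d₀) (fun j hj => ?_) fun i hi j hj hij => ?_
        · simpa [Pset] using (mem_filter.1 hj).2
        · exact hg (mem_filter.1 hi).1 (mem_filter.1 hj).1 (mul_right_cancel₀ hd₀' hij)
    _ = l₀ := by simp

theorem card_le_sum_of_forall_exists_mem_Pset {ι : Type*} [DecidableEq ι] (hd : ∀ k, 0 < d k)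
    (T : Finset ι) {g : ι → ℤ} (hg : Set.InjOn g T) (K : Finset (Fin r))
    (hcover : ∀ j ∈ T, ∃ k ∈ K, g j ∈ Pset (m k) (d k) (l k)) :
    #T ≤ ∑ k ∈ K, l k :=
  calc #T ≤ #(K.biUnion fun k => T.filter (fun j => g j ∈ Pset (m k) (d k) (l k))) :=
        card_le_card fun j hj =>
          let ⟨k, hk, hjk⟩ := hcover j hj
          mem_biUnion.2 ⟨k, hk, mem_filter.2 ⟨hj, hjk⟩⟩
    _ ≤ ∑ k ∈ K, #(T.filter (fun j => g j ∈ Pset (m k) (d k) (l k))) := card_biUnion_le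
    _ ≤ ∑ k ∈ K, l k := sum_le_sum fun k _ => card_filter_mem_Pset_le T hg (hd k)

theorem lt_mul_of_mem_Pset_of_lt_s12 {m₀ y z : ℤ} {d₀ l₀ : ℕ} (hy : y ∈ Pset m₀ d₀ l₀) (hyz : y < z)
    (hz : z ∉ Pset m₀ d₀ l₀) : m₀ + l₀ < z * d₀ := by
  have : y * d₀ ≤ z * d₀ := mul_le_mul_of_nonneg_right hyz.le (Int.natCast_nonneg _)
  simp only [Pset, Set.mem_ofPred_eq, not_and, not_le] at hy hz
  exact hz (by omega)

theorem mul_le_of_mem_Pset_of_lt_s12 {m₀ y z : ℤ} {d₀ l₀ : ℕ} (hy : y ∈ Pset m₀ d₀ l₀) (hzy : z < y) :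
    z * d₀ ≤ m₀ + l₀ :=
  (mul_le_mul_of_nonneg_right hzy.le (Int.natCast_nonneg _)).trans hy.2

variable {l d m} {n : ℕ} (hd : ∀ k, 0 < d k) (hsum : ∑ k, l k = n)
  {g : Fin (n + 2) → ℤ} (hg : StrictMono g)
include hd hsum hg

theorem exists_forall_not_mem_Pset : ∃ i, ∀ k, g i ∉ Pset (m k) (d k) (l k) := by
  by_contra! h
  have := card_le_sum_of_forall_exists_mem_Pset l d m hd univ hg.injective.injOn univ
    fun j _ => (h j).imp fun k hk => ⟨mem_univ k, hk⟩
  rw [card_univ, Fintype.card_fin, hsum] at this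
  omega

theorem exists_forall_not_mem_Pset_and_le_qval :
    ∃ i : Fin (n + 2), (∀ k, g i ∉ Pset (m k) (d k) (l k)) ∧ (i : ℕ) ≤ qval l d m (g i) := by
  obtain ⟨i, hfree, hmin⟩ :=
    wellFounded_lt.has_min {i | ∀ k, g i ∉ Pset (m k) (d k) (l k)}
      (exists_forall_not_mem_Pset hd hsum hg)
  refine ⟨i, hfree, ?_⟩
  calc (i : ℕ) = #(Iio i) := (Fin.card_Iio i).symm
    _ ≤ qval l d m (g i) := card_le_sum_of_forall_exists_mem_Pset l d m hd _ hg.injective.injOn _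
        fun j hj => by
          obtain ⟨k, hk⟩ : ∃ k, g j ∈ Pset (m k) (d k) (l k) := by
            simpa using mt (hmin j) (not_not.2 (mem_Iio.1 hj))
          exact ⟨k, mem_filter.2 ⟨mem_univ k,
            lt_mul_of_mem_Pset_of_lt_s12 hk (hg (mem_Iio.1 hj)) (hfree k)⟩, hk⟩

theorem exists_forall_not_mem_Pset_and_qval_add_one_le :
    ∃ i : Fin (n + 2), (∀ k, g i ∉ Pset (m k) (d k) (l k)) ∧ qval l d m (g i) + 1 ≤ i := by
  obtain ⟨i, hfree, hmax⟩ :=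
    wellFounded_gt.has_min {i | ∀ k, g i ∉ Pset (m k) (d k) (l k)}
      (exists_forall_not_mem_Pset hd hsum hg)
  refine ⟨i, hfree, ?_⟩
  have hcount : #(Ioi i) ≤ ∑ k ∈ univ.filter (fun k => ¬ m k + l k < g i * d k), l k :=
    card_le_sum_of_forall_exists_mem_Pset l d m hd _ hg.injective.injOn _ fun j hj => by
      obtain ⟨k, hk⟩ : ∃ k, g j ∈ Pset (m k) (d k) (l k) := by
        simpa using mt (hmax j) (not_not.2 (mem_Ioi.1 hj))
      exact ⟨k, mem_filter.2 ⟨mem_univ k,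
        not_lt.2 (mul_le_of_mem_Pset_of_lt_s12 hk (hg (mem_Ioi.1 hj)))⟩, hk⟩
  have hsplit := sum_filter_add_sum_filter_not univ (fun k => m k + l k < g i * d k) l
  rw [Fin.card_Ioi] at hcount
  unfold qval
  omega

end Blocking

section Nset

variable {r n : ℕ} {l d : Fin r → ℕ} {s : Fin (n + 1) → ℕ} {m : Fin r → ℤ}

theorem qval_le_of_mem_Sset (hmono : Monotone s)
    (hR : ∀ k, (d k : ℤ) * Rval l s k - l k ≤ m k) {p : ℕ} {z : ℤ} (hz : z ∈ Sset s p) :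
    qval l d m z ≤ p :=
  calc qval l d m z ≤ ∑ k ∈ univ.filter (fun k => IdS l k ≤ p), l k := by
        refine sum_le_sum_of_subset fun k hk => mem_filter.2 ⟨mem_univ k, ?_⟩
        by_contra! hp
        have hzR : z ≤ Rval l s k := by
          rw [Rval_eq_sumLast]
          exact (le_sumLast_of_mem_Sset hmono hz).trans (sumLast_mono s (by omega))
        have := mul_le_mul_of_nonneg_right hzR (Int.natCast_nonneg (d k))
        linarith [(mem_filter.1 hk).2, hR k]
    _ ≤ p := sum_filter_IdS_le l p

theorem le_qval_add_one_of_mem_Sset (hmono : Monotone s)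
    (hL : ∀ k, m k ≤ (d k : ℤ) * Lval l s k - 1) (hsum : ∑ k, l k = n) {p : ℕ} (hp : p ≤ n + 1)
    {z : ℤ} (hz : z ∈ Sset s p) (hfree : ∀ k, z ∉ Pset (m k) (d k) (l k)) :
    p ≤ qval l d m z + 1 := by
  suffices p - 1 ≤ qval l d m z by omega
  calc p - 1 ≤ ∑ k ∈ univ.filter (fun k => IdSlt l k < p - 1), l k :=
        le_sum_filter_IdSlt_lt l (by omega)
    _ ≤ qval l d m z := by
        refine sum_le_sum_of_subset fun k hk => mem_filter.2 ⟨mem_univ k, ?_⟩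
        have hLz : Lval l s k ≤ z := by
          rw [Lval_eq_sumFirst]
          exact (sumFirst_mono s (by rw [mem_filter] at hk; omega)).trans (sumFirst_le_of_mem_Sset hmono hz)
        have := mul_le_mul_of_nonneg_right hLz (Int.natCast_nonneg (d k))
        have hfreek := hfree k
        simp only [Pset, Set.mem_ofPred_eq, not_and, not_le] at hfreek
        exact hfreek (by linarith [hL k])

variable (hd : ∀ k, 0 < d k) (hsum : ∑ k, l k = n) (hs : ∀ i, 0 < s i) (hmono : Monotone s)
include hd hsum hs hmono

theorem zero_mem_Nset (hR : ∀ k, (d k : ℤ) * Rval l s k - l k ≤ m k) : 0 ∈ Nset l d s m := by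
  have hg : StrictMono fun i : Fin (n + 2) => sumFirst s i :=
    fun i j h => sumFirst_lt_sumFirst hs h (by omega)
  obtain ⟨i, hfree, hle⟩ := exists_forall_not_mem_Pset_and_le_qval hd hsum hg
  have hmem := sumFirst_mem_Sset s (t := i) (by omega)
  have hge := qval_le_of_mem_Sset hmono hR hmem
  exact ⟨i, by omega, _, ⟨hmem, hfree⟩, by omega⟩

theorem one_mem_Nset (hL : ∀ k, m k ≤ (d k : ℤ) * Lval l s k - 1) : 1 ∈ Nset l d s m := by
  have hg : StrictMono fun i : Fin (n + 2) => sumLast s i :=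
    fun i j h => sumLast_lt_sumLast hs h (by omega)
  obtain ⟨i, hfree, hle⟩ := exists_forall_not_mem_Pset_and_qval_add_one_le hd hsum hg
  have hmem := sumLast_mem_Sset s (t := i) (by omega)
  have hge := le_qval_add_one_of_mem_Sset hmono hL hsum (by omega) hmem hfree
  exact ⟨i, by omega, _, ⟨hmem, hfree⟩, by omega⟩

end Nset

theorem stmt12_general (r n : ℕ) (l d : Fin r → ℕ)
    (hd : ∀ k, 1 ≤ d k) (hsum : ∑ k, l k = n)
    (s : Fin (n + 1) → ℕ) (hs : ∀ i, 0 < s i) (hmono : Monotone s)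
    (m : Fin r → ℤ)
    (hm : ∀ k : Fin r,
      (d k : ℤ) * Rval l s k - (l k : ℤ) ≤ m k ∧ m k ≤ (d k : ℤ) * Lval l s k - 1) :
    Nset l d s m = {0, 1} := by
  have hR k := (hm k).1
  have hL k := (hm k).2
  refine subset_antisymm ?_ ?_
  · rintro ν ⟨p, hp, z, ⟨hz, hfree⟩, rfl⟩
    have := qval_le_of_mem_Sset hmono hR hz
    have := le_qval_add_one_of_mem_Sset hmono hL hsum hp hz hfree
    simp only [Set.mem_insert_iff, Set.mem_singleton_iff]
    omega
  · rintro ν (rfl | rfl)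
    exacts [zero_mem_Nset hd hsum hs hmono hR, one_mem_Nset hd hsum hs hmono hL]

theorem stmt12 (r n : ℕ) (hr : 1 ≤ r) (l d : Fin r → ℕ)
    (hl : ∀ k, 1 ≤ l k) (hd : ∀ k, 1 ≤ d k) (hsum : ∑ k, l k = n)
    (s : Fin (n + 1) → ℕ) (hs : ∀ i, 0 < s i) (hmono : Monotone s)
    (hdet : ∀ k : Fin r, (d k : ℤ) * Rval l s k - (l k : ℤ) < (d k : ℤ) * Lval l s k)
    (m : Fin r → ℤ)
    (hm : ∀ k : Fin r,
      (d k : ℤ) * Rval l s k - (l k : ℤ) ≤ m k ∧ m k ≤ (d k : ℤ) * Lval l s k - 1) :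
    Nset l d s m = {0, 1} :=
  stmt12_general r n l d hd hsum s hs hmono m hm
end
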